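/- Let 0 < α < 1, λ > 0, and define s(t) := E_α(-λ t^α) for t ≥ 0, where E_α(z) := ∑_{n=0}^∞ zⁿ/Γ(αn+1) is the Mittag–Leffler function, and l(t) := t^{α-1}/Γ(α) for t > 0. Then s is the solution of the integral equation s(t) + λ (l ∗ s)(t) = 1 for all t > 0, where (l ∗ s)(t) := ∫₀^t l(t-τ) s(τ) dτ. -/

import Mathlib

/-!
Expanding `E_α(z τ^α) = ∑ zⁿ τ^(αn) / Γ(αn+1)` and integrating term by term against the kernel
`(t - τ)^(α-1) / Γ(α)`, the Beta integral turns `τ^(αn)` into `Γ(αn+1) t^(αn+α) / Γ(αn+α+1)`.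
Hence `z (l ∗ E_α(z ·^α))(t) = ∑_{n ≥ 1} (z t^α)ⁿ / Γ(αn+1) = E_α(z t^α) - 1` for every real `z`;
take `z = -λ`. The interchange of sum and integral is justified by absolute convergence, which
follows from the ratio test and the bound `Γ(y+α) / Γ(y) ≥ (y-1)^α` given by log-convexity of `Γ`.
-/

noncomputable def mittagLeffler (α z : ℝ) : ℝ :=
  ∑' n : ℕ, z ^ n / Real.Gamma (α * n + 1)

open Real MeasureTheory Filter Set

namespace Real

theorem sub_one_rpow_le_Gamma_add_div_Gamma {a y : ℝ} (ha : 0 < a) (hy : 1 < y) :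
    (y - 1) ^ a ≤ Gamma (y + a) / Gamma y := by
  have hy0 : 0 < y - 1 := by linarith
  have hΓy := Gamma_pos_of_pos (by linarith : 0 < y)
  have hΓya := Gamma_pos_of_pos (by linarith : 0 < y + a)
  have hslope := convexOn_log_Gamma.slope_mono_adjacent (x := y - 1) (y := y) (z := y + a)
    (mem_Ioi.2 hy0) (mem_Ioi.2 (by linarith)) (by linarith) (by linarith)
  have hrec : log (Gamma y) = log (y - 1) + log (Gamma (y - 1)) := by
    conv_lhs => rw [← sub_add_cancel y 1, Gamma_add_one hy0.ne']
    exact log_mul hy0.ne' (Gamma_pos_of_pos hy0).ne'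
  simp only [Function.comp_apply, hrec, sub_sub_cancel, div_one, add_sub_cancel_left] at hslope
  rw [le_div_iff₀ ha] at hslope
  rw [rpow_def_of_pos hy0, ← log_le_log_iff (exp_pos _) (div_pos hΓya hΓy), log_exp,
    log_div hΓya.ne' hΓy.ne']
  linarith

theorem tendsto_Gamma_add_div_Gamma_atTop {a : ℝ} (ha : 0 < a) :
    Tendsto (fun y ↦ Gamma (y + a) / Gamma y) atTop atTop :=
  tendsto_atTop_mono' _ ((eventually_gt_atTop 1).mono fun _ hy ↦
    sub_one_rpow_le_Gamma_add_div_Gamma ha hy)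
    ((tendsto_rpow_atTop ha).comp (tendsto_atTop_add_const_right _ (-1) tendsto_id))

end Real

theorem integral_rpow_mul_one_sub_rpow {a b : ℝ} (ha : 0 < a) (hb : 0 < b) :
    ∫ x in (0 : ℝ)..1, x ^ (a - 1) * (1 - x) ^ (b - 1) = Gamma a * Gamma b / Gamma (a + b) := by
  have hbeta : Complex.betaIntegral a b =
      ((∫ x in (0 : ℝ)..1, x ^ (a - 1) * (1 - x) ^ (b - 1) : ℝ) : ℂ) := by
    rw [Complex.betaIntegral, ← intervalIntegral.integral_ofReal]
    refine intervalIntegral.integral_congr fun x hx ↦ ?_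
    rw [uIcc_of_le zero_le_one] at hx
    simp only [Complex.ofReal_mul, Complex.ofReal_cpow hx.1,
      Complex.ofReal_cpow (sub_nonneg.2 hx.2), Complex.ofReal_sub, Complex.ofReal_one]
  have h := Complex.Gamma_mul_Gamma_eq_betaIntegral (s := a) (t := b)
    (by simpa using ha) (by simpa using hb)
  rw [hbeta, Complex.Gamma_ofReal, Complex.Gamma_ofReal, ← Complex.ofReal_add,
    Complex.Gamma_ofReal, ← Complex.ofReal_mul, ← Complex.ofReal_mul] at h
  rw [eq_div_iff (Gamma_pos_of_pos (add_pos ha hb)).ne', Complex.ofReal_injective h, mul_comm]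

theorem integral_sub_rpow_mul_rpow {a b t : ℝ} (ha : 0 < a) (hb : 0 < b) (ht : 0 < t) :
    ∫ τ in (0 : ℝ)..t, (t - τ) ^ (a - 1) * τ ^ (b - 1) =
      Gamma a * Gamma b / Gamma (a + b) * t ^ (a + b - 1) := by
  have hscale := intervalIntegral.integral_comp_mul_right
    (fun τ ↦ (t - τ) ^ (a - 1) * τ ^ (b - 1)) (a := 0) (b := 1) ht.ne'
  have hfactor : ∫ x in (0 : ℝ)..1, (t - x * t) ^ (a - 1) * (x * t) ^ (b - 1)
      = t ^ (a + b - 2) * ∫ x in (0 : ℝ)..1, x ^ (b - 1) * (1 - x) ^ (a - 1) := by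
    rw [← intervalIntegral.integral_const_mul]
    refine intervalIntegral.integral_congr fun x hx ↦ ?_
    rw [uIcc_of_le zero_le_one] at hx
    rw [← one_sub_mul, mul_rpow (sub_nonneg.2 hx.2) ht.le, mul_rpow hx.1 ht.le,
      show a + b - 2 = (a - 1) + (b - 1) by ring, rpow_add ht]
    ring
  rw [zero_mul, one_mul, hfactor, integral_rpow_mul_one_sub_rpow hb ha, add_comm b,
    mul_comm (Gamma b), smul_eq_mul, eq_inv_mul_iff_mul_eq₀ ht.ne'] at hscale
  rw [← hscale, show a + b - 1 = a + b - 2 + 1 by ring, rpow_add_one ht.ne']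
  ring

theorem intervalIntegrable_sub_rpow {a : ℝ} (ha : 0 < a) (t : ℝ) :
    IntervalIntegrable (fun τ ↦ (t - τ) ^ (a - 1)) volume 0 t := by
  have h := (intervalIntegral.intervalIntegrable_rpow' (a := 0) (b := t)
    (by linarith : -1 < a - 1)).comp_sub_left t
  rw [sub_zero, sub_self] at h
  exact h.symm

theorem summable_pow_div_Gamma_mul_add {α c : ℝ} (hα : 0 < α) (hc : 0 < c) (z : ℝ) :
    Summable fun n : ℕ ↦ z ^ n / Gamma (α * n + c) := by
  refine summable_of_ratio_norm_eventually_le one_half_lt_one ?_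
  have hlin : Tendsto (fun n : ℕ ↦ α * n + c) atTop atTop :=
    tendsto_atTop_add_const_right _ c (tendsto_natCast_atTop_atTop.const_mul_atTop hα)
  filter_upwards [((tendsto_Gamma_add_div_Gamma_atTop hα).comp hlin).eventually_ge_atTop
    (2 * |z|)] with n hn
  have hΓ : 0 < Gamma (α * n + c) := Gamma_pos_of_pos (by positivity)
  have hΓ' : 0 < Gamma (α * n + c + α) := Gamma_pos_of_pos (by positivity)
  rw [Function.comp_apply, le_div_iff₀ hΓ] at hn
  rw [Nat.cast_succ, mul_add_one, add_right_comm, norm_div, norm_div, norm_pow, norm_pow,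
    Real.norm_of_nonneg hΓ.le, Real.norm_of_nonneg hΓ'.le, div_le_iff₀ hΓ', pow_succ]
  calc ‖z‖ ^ n * ‖z‖
      = 1 / 2 * (‖z‖ ^ n / Gamma (α * n + c)) * (2 * |z| * Gamma (α * n + c)) := by
        rw [Real.norm_eq_abs]; field_simp
    _ ≤ 1 / 2 * (‖z‖ ^ n / Gamma (α * n + c)) * Gamma (α * n + c + α) := by gcongr

theorem integral_sub_rpow_div_Gamma_mul_pow_div_Gamma {α : ℝ} (hα : 0 < α) (z : ℝ) {t : ℝ}
    (ht : 0 < t) (n : ℕ) :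
    ∫ τ in (0 : ℝ)..t, (t - τ) ^ (α - 1) / Gamma α * ((z * τ ^ α) ^ n / Gamma (α * n + 1))
      = t ^ α * ((z * t ^ α) ^ n / Gamma (α * n + (α + 1))) := by
  have hb : 0 < α * n + 1 := by positivity
  calc ∫ τ in (0 : ℝ)..t, (t - τ) ^ (α - 1) / Gamma α * ((z * τ ^ α) ^ n / Gamma (α * n + 1))
      = z ^ n / (Gamma α * Gamma (α * n + 1)) *
          ∫ τ in (0 : ℝ)..t, (t - τ) ^ (α - 1) * τ ^ (α * n + 1 - 1) := by
        rw [← intervalIntegral.integral_const_mul]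
        refine intervalIntegral.integral_congr fun τ hτ ↦ ?_
        rw [uIcc_of_le ht.le] at hτ
        rw [mul_pow, ← rpow_mul_natCast hτ.1, add_sub_cancel_right]
        ring
    _ = t ^ α * ((z * t ^ α) ^ n / Gamma (α * n + (α + 1))) := by
        rw [integral_sub_rpow_mul_rpow hα hb ht, show α + (α * n + 1) - 1 = α + α * n by ring,
          rpow_add ht, rpow_mul_natCast ht.le, show α + (α * n + 1) = α * n + (α + 1) by ring,
          mul_pow]
        have := (Gamma_pos_of_pos hα).ne'
        have := (Gamma_pos_of_pos hb).ne'
        field_simp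

theorem hasSum_integral_sub_rpow_div_Gamma_mul_mittagLeffler {α : ℝ} (hα : 0 < α) (z : ℝ)
    {t : ℝ} (ht : 0 < t) :
    HasSum (fun n : ℕ ↦ t ^ α * ((z * t ^ α) ^ n / Gamma (α * n + (α + 1))))
      (∫ τ in (0 : ℝ)..t, (t - τ) ^ (α - 1) / Gamma α * mittagLeffler α (z * τ ^ α)) := by
  set F : ℕ → ℝ → ℝ := fun n τ ↦
    (t - τ) ^ (α - 1) / Gamma α * ((z * τ ^ α) ^ n / Gamma (α * n + 1))
  have hF_int (n : ℕ) : IntervalIntegrable (F n) volume 0 t :=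
    ((intervalIntegrable_sub_rpow hα t).div_const _).mul_continuousOn
      ((((continuous_const.mul (continuous_rpow_const hα.le)).pow n).div_const _).continuousOn)
  have hF_norm (n : ℕ) : ∫ τ in Ioc 0 t, ‖F n τ‖
      = t ^ α * ((|z| * t ^ α) ^ n / Gamma (α * n + (α + 1))) := by
    rw [← intervalIntegral.integral_of_le ht.le,
      ← integral_sub_rpow_div_Gamma_mul_pow_div_Gamma hα |z| ht]
    refine intervalIntegral.integral_congr fun τ hτ ↦ ?_
    rw [uIcc_of_le ht.le] at hτ
    simp only [F, norm_mul, norm_div, norm_pow, Real.norm_eq_abs,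
      abs_of_nonneg (rpow_nonneg (sub_nonneg.2 hτ.2) _), abs_of_nonneg (rpow_nonneg hτ.1 _),
      abs_of_pos (Gamma_pos_of_pos hα),
      abs_of_pos (Gamma_pos_of_pos (by positivity : 0 < α * n + 1))]
  have hsum := hasSum_integral_of_summable_integral_norm (fun n ↦ (hF_int n).1)
    (by simpa only [hF_norm] using
      (summable_pow_div_Gamma_mul_add hα (by positivity) (|z| * t ^ α)).mul_left (t ^ α))
  simp only [← intervalIntegral.integral_of_le ht.le, F,
    integral_sub_rpow_div_Gamma_mul_pow_div_Gamma hα z ht, tsum_mul_left] at hsum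
  exact hsum

theorem mittagLeffler_mul_rpow_eq_one_add_mul_integral {α : ℝ} (hα : 0 < α) (z : ℝ) {t : ℝ}
    (ht : 0 < t) :
    mittagLeffler α (z * t ^ α)
      = 1 + z * ∫ τ in (0 : ℝ)..t, (t - τ) ^ (α - 1) / Gamma α * mittagLeffler α (z * τ ^ α) := by
  have hshift : (fun n : ℕ ↦ z * (t ^ α * ((z * t ^ α) ^ n / Gamma (α * n + (α + 1)))))
      = fun n : ℕ ↦ (z * t ^ α) ^ (n + 1) / Gamma (α * ↑(n + 1) + 1) := by
    ext n
    rw [Nat.cast_succ, show α * ((n : ℝ) + 1) + 1 = α * n + (α + 1) by ring, pow_succ]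
    ring
  have hsum := (hasSum_integral_sub_rpow_div_Gamma_mul_mittagLeffler hα z ht).mul_left z
  rw [hshift] at hsum
  rw [mittagLeffler, (summable_pow_div_Gamma_mul_add hα one_pos _).tsum_eq_zero_add, hsum.tsum_eq]
  simp

theorem mittagLeffler_solves_integral_equation_general (α lam : ℝ) (hα : 0 < α) :
    ∀ t : ℝ, 0 < t →
      mittagLeffler α (-lam * t ^ α)
        + lam * ∫ τ in (0 : ℝ)..t,
            ((t - τ) ^ (α - 1) / Real.Gamma α) * mittagLeffler α (-lam * τ ^ α) = 1 := by
  intro t ht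
  rw [mittagLeffler_mul_rpow_eq_one_add_mul_integral hα (-lam) ht]
  ring

/-- For `0 < α < 1` and `λ > 0`, the function `s(t) = E_α(-λ t^α)` solves the integral
equation `s(t) + λ (l ∗ s)(t) = 1` for all `t > 0`, where `l(t) = t^(α-1)/Γ(α)` and
`(l ∗ s)(t) = ∫_0^t l(t-τ) s(τ) dτ`. -/
theorem mittagLeffler_solves_integral_equation (α lam : ℝ) (hα : 0 < α) (hα1 : α < 1)
    (hlam : 0 < lam) :
    ∀ t : ℝ, 0 < t →
      mittagLeffler α (-lam * t ^ α)
        + lam * ∫ τ in (0 : ℝ)..t,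
            ((t - τ) ^ (α - 1) / Real.Gamma α) * mittagLeffler α (-lam * τ ^ α) = 1 :=
  mittagLeffler_solves_integral_equation_general α lam hα
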